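/- arXiv:2303.01997 — 2 statements merged into one kernel-verified Lean document; each statement's English description precedes it below -/
import Mathlib

section
/- Let H be a connected dominating graph with bipartition A ∪ B, where |A| ≤ |B|, and let Δ be the maximum degree of H. Then every vertex of A has degree Δ in H; in particular e(H) = Δ·|A|. -/
open MeasureTheory
open scoped Classical

noncomputable section

/-- A graphon: a symmetric measurable function `[0,1]² → [0,1]` (extended to `ℝ²`). -/
structure Graphon where
  toFun : ℝ → ℝ → ℝ
  symm : ∀ x y, toFun x y = toFun y x
  measurable' : Measurable (Function.uncurry toFun)
  nonneg : ∀ x y, 0 ≤ toFun x y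
  le_one : ∀ x y, toFun x y ≤ 1

/-- The number of edges of a finite simple graph. -/
def SimpleGraph.edgeCard {V : Type} [Fintype V] (H : SimpleGraph V) : ℕ :=
  H.edgeSet.toFinset.card

/-- The homomorphism density `t_H(W)` of a graph `H` in a graphon `W`. -/
def homDensity {V : Type} [Fintype V] (H : SimpleGraph V) (W : Graphon) : ℝ :=
  ∫ x in (Set.univ.pi fun _ : V => Set.Icc (0:ℝ) 1),
    ∏ e ∈ H.edgeSet.toFinset,
      Sym2.lift ⟨fun i j => W.toFun (x i) (x j), fun i j => W.symm (x i) (x j)⟩ e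

/-- The homomorphism density of an edge subset `J` (of a graph on vertex set `V`). -/
def subDensity {V : Type} [Fintype V] (J : Finset (Sym2 V)) (W : Graphon) : ℝ :=
  ∫ x in (Set.univ.pi fun _ : V => Set.Icc (0:ℝ) 1),
    ∏ e ∈ J,
      Sym2.lift ⟨fun i j => W.toFun (x i) (x j), fun i j => W.symm (x i) (x j)⟩ e

/-- `H` dominates `H'`: `t_H(W)^{1/e(H)} ≥ t_{H'}(W)^{1/e(H')}` for every graphon `W`. -/
def Dominates {V V' : Type} [Fintype V] [Fintype V']
    (H : SimpleGraph V) (H' : SimpleGraph V') : Prop :=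
  ∀ W : Graphon,
    homDensity H' W ^ ((1 : ℝ) / H'.edgeCard) ≤ homDensity H W ^ ((1 : ℝ) / H.edgeCard)

/-- `H'` is (isomorphic to) a subgraph of `H`. -/
def IsSubgraphOf {V V' : Type} (H' : SimpleGraph V') (H : SimpleGraph V) : Prop :=
  ∃ f : H' →g H, Function.Injective f

/-- `H` is dominating: it dominates all of its subgraphs with at least one edge. -/
def IsDominating {V : Type} [Fintype V] (H : SimpleGraph V) : Prop :=
  ∀ (V' : Type) [Fintype V'] (H' : SimpleGraph V'),
    IsSubgraphOf H' H → 1 ≤ H'.edgeCard → Dominates H H'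

/-- The disjoint union of `r` copies of `H`. -/
def nCopies {V : Type} (H : SimpleGraph V) (r : ℕ) : SimpleGraph (V × Fin r) where
  Adj a b := a.2 = b.2 ∧ H.Adj a.1 b.1
  symm := ⟨fun a b h => ⟨h.1.symm, h.2.symm⟩⟩
  loopless := ⟨fun a h => H.irrefl h.2⟩

/-- The disjoint union of two graphs. -/
def disjUnion {V₁ V₂ : Type} (H₁ : SimpleGraph V₁) (H₂ : SimpleGraph V₂) :
    SimpleGraph (V₁ ⊕ V₂) where
  Adj a b := match a, b with
    | .inl a, .inl b => H₁.Adj a b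
    | .inr a, .inr b => H₂.Adj a b
    | _, _ => False
  symm := ⟨by rintro (a|a) (b|b) h <;> simp_all <;> exact h.symm⟩
  loopless := ⟨by rintro (a|a) h <;> exact (SimpleGraph.irrefl _) h⟩

/-- A cut involution of `H`: an involutive automorphism whose fixed set is a vertex
cut separating `L` and `R`, which are swapped by the involution, with no edges
between `L` and `R`. -/
structure CutInvolution {V : Type} (H : SimpleGraph V) where
  toEquiv : V ≃ V
  adj_iff : ∀ v w, H.Adj (toEquiv v) (toEquiv w) ↔ H.Adj v w
  invol : ∀ v, toEquiv (toEquiv v) = v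
  L : Set V
  R : Set V
  disj : Disjoint L R
  cover : ∀ v, toEquiv v ≠ v → v ∈ L ∨ v ∈ R
  not_fixed : ∀ v ∈ L ∪ R, toEquiv v ≠ v
  maps : ∀ v ∈ L, toEquiv v ∈ R
  no_edge : ∀ v ∈ L, ∀ w ∈ R, ¬ H.Adj v w
  L_nonempty : L.Nonempty
  R_nonempty : R.Nonempty

/-- The left-folding map `φ⁺` of a cut involution. -/
def CutInvolution.plusMap {V : Type} {H : SimpleGraph V} (c : CutInvolution H) : V → V :=
  fun v => if v ∈ c.R then c.toEquiv v else v

/-- The right-folding map `φ⁻` of a cut involution. -/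
def CutInvolution.minusMap {V : Type} {H : SimpleGraph V} (c : CutInvolution H) : V → V :=
  fun v => if v ∈ c.L then c.toEquiv v else v

/-- `J(ψ) = {e ∈ E(H) : ψ(e) ∈ J}` for a (half-folding) map `ψ` on vertices. -/
def foldSet {V : Type} [Fintype V] (H : SimpleGraph V) (J : Finset (Sym2 V)) (ψ : V → V) :
    Finset (Sym2 V) :=
  H.edgeSet.toFinset.filter (fun e => Sym2.map ψ e ∈ J)

/-- The number of homomorphisms from `H` to `G`. -/
def homCount {V U : Type} [Fintype V] [Fintype U]
    (H : SimpleGraph V) (G : SimpleGraph U) : ℕ :=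
  Nat.card (H →g G)

/-- The homomorphism density `t_H(G)` for finite graphs. -/
def homDensityG {V U : Type} [Fintype V] [Fintype U]
    (H : SimpleGraph V) (G : SimpleGraph U) : ℝ :=
  (homCount H G : ℝ) / (Fintype.card U : ℝ) ^ (Fintype.card V)

/-- The tensor (categorical) product of two graphs. -/
def tensorProd {V U : Type} (H : SimpleGraph V) (K : SimpleGraph U) :
    SimpleGraph (V × U) where
  Adj a b := H.Adj a.1 b.1 ∧ K.Adj a.2 b.2
  symm := ⟨fun a b h => ⟨h.1.symm, h.2.symm⟩⟩
  loopless := ⟨fun a h => H.irrefl h.1⟩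

/-- The auxiliary graph `G*` on ordered `m`-tuples of vertices of `G`, with `a ~ a'`
iff every coordinate of `a` is adjacent in `G` to every coordinate of `a'`. -/
def auxPower {U : Type} (G : SimpleGraph U) (m : ℕ) (hm : 1 ≤ m) :
    SimpleGraph (Fin m → U) where
  Adj a b := ∀ i j, G.Adj (a i) (b j)
  symm := ⟨fun a b h i j => (h j i).symm⟩
  loopless := ⟨fun a h => G.irrefl (h ⟨0, hm⟩ ⟨0, hm⟩)⟩

/-- The graph `C₆⁺`: a 6-cycle on vertices `0,…,5` together with a central vertex `6`
joined to the alternating vertices `0, 2, 4`. -/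
def C6plus : SimpleGraph (Fin 7) := SimpleGraph.fromRel (fun a b =>
  (a.1 < 6 ∧ b.1 < 6 ∧ b.1 % 6 = (a.1 + 1) % 6) ∨ (a = 6 ∧ (b = 0 ∨ b = 2 ∨ b = 4)))

end


/-!
The corner graphon `W_δ(x, y) = 1[min(x, y) ≤ δ]` gives `t_K(W_δ)` = the probability that
`{v | x_v ≤ δ}` is a vertex cover of `K`, which is of order `δ ^ τ(K)` for the vertex cover
number `τ(K)`. The star at a vertex of maximum degree `Δ` has density at least `δ`, while
`t_H(W_δ) ≤ 2 ^ v(H) · δ ^ τ(H)`; as `δ → 0`, domination forces `Δ · τ(H) ≤ e(H)`.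
Since `e(H) ≤ ∑_{v ∈ C} deg v ≤ Δ · |C|` for every vertex cover `C`, a minimum cover meets every
edge exactly once, so it is a colour class of the connected bipartite graph `H` and has at least
`|A|` vertices. Hence `Δ · |A| ≤ e(H) = ∑_{v ∈ A} deg v ≤ Δ · |A|`.
-/

open MeasureTheory Finset

namespace SimpleGraph

variable {V : Type} {G : SimpleGraph V}

theorem isVertexCover_iff_forall_mem_edgeSet {s : Set V} :
    G.IsVertexCover s ↔ ∀ e ∈ G.edgeSet, ∃ v ∈ e, v ∈ s := by
  refine ⟨fun h e he => ?_, fun h a b hab => by simpa using h s(a, b) hab⟩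
  induction e using Sym2.ind with
  | _ a b => rcases h he with h | h <;> simp [h]

theorem IsIndepSet.mem_iff_notMem_of_isVertexCover {s : Set V} (hs : G.IsIndepSet s)
    (hs' : G.IsVertexCover s) {v w : V} (h : G.Adj v w) : v ∈ s ↔ w ∉ s :=
  ⟨fun hv hw => hs hv hw h.ne h, fun hw => (hs' h).resolve_right hw⟩

theorem fromEdgeSet_incidenceSet_le (v : V) : fromEdgeSet (G.incidenceSet v) ≤ G :=
  (fromEdgeSet_le G).2 (Set.sdiff_subset.trans (G.incidenceSet_subset v))

theorem isVertexCover_fromEdgeSet_incidenceSet (v : V) :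
    (fromEdgeSet (G.incidenceSet v)).IsVertexCover {v} := by
  intro a b h
  simp only [fromEdgeSet_adj, incidenceSet, Set.mem_ofPred_eq, Sym2.mem_iff] at h
  grind

theorem Preconnected.iff_of_forall_adj (hG : G.Preconnected) {P : V → Prop}
    (hP : ∀ v w, G.Adj v w → (P v ↔ P w)) (u w : V) : P u ↔ P w := by
  obtain ⟨p⟩ := hG u w
  induction p with
  | nil => exact Iff.rfl
  | cons h _ ih => exact (hP _ _ h).trans ih

theorem Preconnected.eq_or_eq_compl_of_forall_adj (hG : G.Preconnected) {s t : Set V}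
    (hs : ∀ v w, G.Adj v w → (v ∈ s ↔ w ∉ s)) (ht : ∀ v w, G.Adj v w → (v ∈ t ↔ w ∉ t)) :
    t = s ∨ t = sᶜ := by
  have hP := hG.iff_of_forall_adj (P := fun v => v ∈ t ↔ v ∈ s) fun v w hvw => by
    have := hs v w hvw; have := ht v w hvw; tauto
  by_cases h : ∃ u, u ∈ t ↔ u ∈ s
  · obtain ⟨u, hu⟩ := h
    exact Or.inl (Set.ext fun v => (hP u v).1 hu)
  · exact Or.inr (Set.ext fun v => by have := fun hv => h ⟨v, hv⟩; tauto)

variable [Fintype V]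

theorem exists_isVertexCover_forall_card_le (G : SimpleGraph V) :
    ∃ C : Finset V, G.IsVertexCover C ∧ ∀ T : Finset V, G.IsVertexCover T → #C ≤ #T := by
  obtain ⟨C, hC, hmin⟩ := exists_min_image {T : Finset V | G.IsVertexCover T} card ⟨univ, by simp⟩
  exact ⟨C, (mem_filter.1 hC).2, fun T hT => hmin T (by simpa)⟩

theorem edgeCard_fromEdgeSet_incidenceSet (v : V) :
    (fromEdgeSet (G.incidenceSet v)).edgeCard = G.degree v := by
  have : (fromEdgeSet (G.incidenceSet v)).edgeSet = G.incidenceSet v := by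
    rw [edgeSet_fromEdgeSet, sdiff_eq_left]
    exact Set.disjoint_left.2 fun e he => G.not_isDiag_of_mem_edgeSet he.1
  rw [edgeCard, ← card_incidenceFinset_eq_degree]
  congr 1
  ext e
  simp only [Set.mem_toFinset, mem_incidenceFinset, this]

theorem sum_degree_le_maxDegree_mul (C : Finset V) : ∑ v ∈ C, G.degree v ≤ G.maxDegree * #C := by
  simpa [mul_comm] using sum_le_card_nsmul C _ _ fun v _ => G.degree_le_maxDegree v

theorem degree_eq_maxDegree_of_maxDegree_mul_le_sum {s : Finset V}
    (h : G.maxDegree * #s ≤ ∑ v ∈ s, G.degree v) : ∀ v ∈ s, G.degree v = G.maxDegree := by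
  refine (sum_eq_sum_iff_of_le fun v _ => G.degree_le_maxDegree v).1 (le_antisymm
    (sum_le_sum fun v _ => G.degree_le_maxDegree v) ?_)
  rwa [sum_const, smul_eq_mul, mul_comm]

theorem sum_degree_eq_sum_card_filter_mem (C : Finset V) :
    ∑ v ∈ C, G.degree v = ∑ e ∈ G.edgeFinset, #{v ∈ C | v ∈ e} := by
  simp_rw [← card_incidenceFinset_eq_degree, incidenceFinset_eq_filter]
  exact sum_card_bipartiteAbove_eq_sum_card_bipartiteBelow (fun v e => v ∈ e)

theorem IsVertexCover.one_le_card_filter_mem {C : Finset V} (hC : G.IsVertexCover C)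
    {e : Sym2 V} (he : e ∈ G.edgeFinset) : 1 ≤ #{v ∈ C | v ∈ e} := by
  induction e using Sym2.ind with
  | _ a b =>
    rw [mem_edgeFinset, mem_edgeSet] at he
    rw [Nat.one_le_iff_ne_zero, ← Nat.pos_iff_ne_zero, card_pos]
    rcases hC he with h | h
    · exact ⟨a, by simpa using h⟩
    · exact ⟨b, by simpa using h⟩

theorem IsVertexCover.isIndepSet_of_sum_degree_le {C : Finset V} (hC : G.IsVertexCover C)
    (h : ∑ v ∈ C, G.degree v ≤ G.edgeCard) : G.IsIndepSet C := by
  have hone : ∀ e ∈ G.edgeFinset, 1 = #{v ∈ C | v ∈ e} := by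
    refine (sum_eq_sum_iff_of_le fun e he => hC.one_le_card_filter_mem he).1 (le_antisymm
      (sum_le_sum fun e he => hC.one_le_card_filter_mem he) ?_)
    rwa [← sum_degree_eq_sum_card_filter_mem, ← card_eq_sum_ones]
  intro a ha b hb hab hadj
  have hpair : ({a, b} : Finset V) ⊆ {v ∈ C | v ∈ s(a, b)} := by
    intro v
    simp only [mem_insert, mem_singleton, mem_filter, Sym2.mem_iff]
    rintro (rfl | rfl) <;> simp_all
  have := card_le_card hpair
  rw [card_pair hab, ← hone s(a, b) (by simpa using hadj)] at this
  omega

end SimpleGraph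

theorem IsSubgraphOf.of_le {V : Type} {G G' : SimpleGraph V} (h : G' ≤ G) : IsSubgraphOf G' G :=
  ⟨SimpleGraph.Hom.ofLE h, fun _ _ h => h⟩

theorem pow_le_pow_of_rpow_one_div_le {x y : ℝ} {a m : ℕ} (hx : 0 ≤ x) (hy : 0 ≤ y)
    (ha : a ≠ 0) (hm : m ≠ 0) (h : x ^ ((1 : ℝ) / a) ≤ y ^ ((1 : ℝ) / m)) : x ^ m ≤ y ^ a := by
  rw [one_div, one_div] at h
  calc x ^ m = ((x ^ (a⁻¹ : ℝ)) ^ a) ^ m := by rw [Real.rpow_inv_natCast_pow hx ha]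
    _ = (x ^ (a⁻¹ : ℝ)) ^ (a * m) := by rw [pow_mul]
    _ ≤ (y ^ (m⁻¹ : ℝ)) ^ (a * m) := pow_le_pow_left₀ (by positivity) h _
    _ = y ^ a := by rw [mul_comm, pow_mul, Real.rpow_inv_natCast_pow hy hm]

theorem le_of_forall_pow_le_mul_pow {m k : ℕ} {K : ℝ} (hK : 0 ≤ K)
    (h : ∀ δ : ℝ, 0 < δ → δ ≤ 1 → δ ^ m ≤ K * δ ^ k) : k ≤ m := by
  by_contra! hmk
  set δ := (K + 1)⁻¹
  have hδ0 : 0 < δ := by positivity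
  have hδ1 : δ ≤ 1 := inv_le_one_of_one_le₀ (by linarith)
  have hle : δ ^ m ≤ K * δ * δ ^ m := calc
    δ ^ m ≤ K * δ ^ k := h δ hδ0 hδ1
    _ ≤ K * δ ^ (m + 1) := mul_le_mul_of_nonneg_left (pow_le_pow_of_le_one hδ0.le hδ1 hmk) hK
    _ = K * δ * δ ^ m := by ring
  have hlt : K * δ < 1 := by rw [← div_eq_mul_inv, div_lt_one (by linarith)]; linarith
  nlinarith [pow_pos hδ0 m]

noncomputable section

namespace Graphon

def corner (δ : ℝ) : Graphon where
  toFun x y := if x ≤ δ ∨ y ≤ δ then 1 else 0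
  symm x y := if_congr or_comm rfl rfl
  measurable' := Measurable.ite ((measurableSet_le measurable_fst measurable_const).union
    (measurableSet_le measurable_snd measurable_const)) measurable_const measurable_const
  nonneg x y := by split <;> norm_num
  le_one x y := by split <;> norm_num

variable {V : Type}

def edgeWeight (W : Graphon) (x : V → ℝ) : Sym2 V → ℝ :=
  Sym2.lift ⟨fun i j => W.toFun (x i) (x j), fun i j => W.symm (x i) (x j)⟩

theorem corner_edgeWeight (δ : ℝ) (x : V → ℝ) (e : Sym2 V) :
    (corner δ).edgeWeight x e = if ∃ v ∈ e, x v ≤ δ then 1 else 0 := by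
  induction e using Sym2.ind with
  | _ a b => simp [edgeWeight, corner]

end Graphon

abbrev cubeVolume (V : Type) [Fintype V] : Measure (V → ℝ) :=
  volume.restrict (Set.univ.pi fun _ : V => Set.Icc (0 : ℝ) 1)

open Graphon

variable {V : Type} [Fintype V]

theorem cubeVolume_eq_pi : cubeVolume V = Measure.pi fun _ => volume.restrict (Set.Icc 0 1) := by
  rw [cubeVolume, volume_pi, Measure.restrict_pi_pi]

instance : IsFiniteMeasure (cubeVolume V) := by
  rw [cubeVolume_eq_pi]; infer_instance

theorem cubeVolume_real_pi_Iic (S : Finset V) {δ : ℝ} (h0 : 0 ≤ δ) (h1 : δ ≤ 1) :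
    (cubeVolume V).real ((S : Set V).pi fun _ => Set.Iic δ) = δ ^ #S := by
  have hIic : volume.restrict (Set.Icc (0 : ℝ) 1) (Set.Iic δ) = ENNReal.ofReal δ := by
    rw [Measure.restrict_apply measurableSet_Iic, Set.inter_comm, ← Set.Ici_inter_Iic,
      Set.inter_assoc, Set.Iic_inter_Iic, min_eq_right h1, Set.Ici_inter_Iic, Real.volume_Icc,
      sub_zero]
  rw [measureReal_def, cubeVolume_eq_pi, ← Set.univ_pi_ite, Measure.pi_pi]
  simp [apply_ite, hIic, h0]

theorem setOf_isVertexCover_eq_biUnion (G : SimpleGraph V) (δ : ℝ) :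
    {x : V → ℝ | G.IsVertexCover {v | x v ≤ δ}} =
      ⋃ T ∈ ({T | G.IsVertexCover T} : Finset (Finset V)), (T : Set V).pi fun _ => Set.Iic δ := by
  ext x
  simp only [Set.mem_ofPred_eq, Set.mem_iUnion, Finset.mem_filter, Finset.mem_univ, true_and,
    exists_prop, Set.mem_pi, Finset.mem_coe, Set.mem_Iic]
  refine ⟨fun h => ⟨({v | x v ≤ δ} : Finset V), by simpa using h, fun v hv => by simpa using hv⟩,
    ?_⟩
  rintro ⟨T, hT, hx⟩
  exact hT.subset fun v hv => hx v hv

theorem measurableSet_setOf_isVertexCover (G : SimpleGraph V) (δ : ℝ) :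
    MeasurableSet {x : V → ℝ | G.IsVertexCover {v | x v ≤ δ}} := by
  rw [setOf_isVertexCover_eq_biUnion]
  exact Finset.measurableSet_biUnion _ fun T _ =>
    MeasurableSet.pi T.countable_toSet fun _ _ => measurableSet_Iic

theorem homDensity_corner (G : SimpleGraph V) (δ : ℝ) :
    homDensity G (corner δ) = (cubeVolume V).real {x | G.IsVertexCover {v | x v ≤ δ}} := by
  rw [← integral_indicator_one (measurableSet_setOf_isVertexCover G δ)]
  refine integral_congr_ae (ae_of_all _ fun x => ?_)
  change ∏ e ∈ G.edgeSet.toFinset, (corner δ).edgeWeight x e = _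
  have hcover := G.isVertexCover_iff_forall_mem_edgeSet (s := {v | x v ≤ δ})
  by_cases hx : G.IsVertexCover {v | x v ≤ δ}
  · rw [Set.indicator_of_mem hx, Pi.one_apply]
    refine prod_eq_one fun e he => ?_
    rw [corner_edgeWeight]
    exact if_pos (hcover.1 hx e (Set.mem_toFinset.1 he))
  · rw [Set.indicator_of_notMem hx]
    obtain ⟨e, he, hne⟩ : ∃ e ∈ G.edgeSet, ¬∃ v ∈ e, x v ≤ δ := by
      simpa [hcover] using hx
    refine prod_eq_zero (Set.mem_toFinset.2 he) ?_
    rw [corner_edgeWeight, if_neg hne]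

theorem homDensity_corner_nonneg (G : SimpleGraph V) (δ : ℝ) : 0 ≤ homDensity G (corner δ) := by
  rw [homDensity_corner]
  exact measureReal_nonneg

theorem pow_card_le_homDensity_corner {G : SimpleGraph V} {C : Finset V}
    (hC : G.IsVertexCover C) {δ : ℝ} (h0 : 0 ≤ δ) (h1 : δ ≤ 1) :
    δ ^ #C ≤ homDensity G (corner δ) := by
  rw [homDensity_corner, ← cubeVolume_real_pi_Iic C h0 h1]
  exact measureReal_mono fun x hx => hC.subset fun v hv => hx v hv

theorem homDensity_corner_le {G : SimpleGraph V} {τ : ℕ}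
    (hτ : ∀ T : Finset V, G.IsVertexCover T → τ ≤ #T) {δ : ℝ} (h0 : 0 ≤ δ) (h1 : δ ≤ 1) :
    homDensity G (corner δ) ≤ 2 ^ Fintype.card V * δ ^ τ := by
  rw [homDensity_corner, setOf_isVertexCover_eq_biUnion]
  set covers : Finset (Finset V) := {T | G.IsVertexCover T}
  calc _ ≤ ∑ T ∈ covers, (cubeVolume V).real ((T : Set V).pi fun _ => Set.Iic δ) :=
        measureReal_biUnion_finset_le _ _
    _ = ∑ T ∈ covers, δ ^ #T := sum_congr rfl fun T _ => cubeVolume_real_pi_Iic T h0 h1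
    _ ≤ ∑ T ∈ covers, δ ^ τ :=
        sum_le_sum fun T hT => pow_le_pow_of_le_one h0 h1 (hτ T (mem_filter.1 hT).2)
    _ ≤ 2 ^ Fintype.card V * δ ^ τ := by
        rw [sum_const, nsmul_eq_mul]
        gcongr
        exact_mod_cast (card_le_univ covers).trans_eq (by simp [Fintype.card_finset])

theorem IsDominating.pow_edgeCard_le {G : SimpleGraph V} (hG : IsDominating G) {τ : ℕ}
    (hτ : ∀ T : Finset V, G.IsVertexCover T → τ ≤ #T) {v : V} (hv : 0 < G.degree v)
    {δ : ℝ} (h0 : 0 < δ) (h1 : δ ≤ 1) :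
    δ ^ G.edgeCard ≤ (2 ^ Fintype.card V * δ ^ τ) ^ G.degree v := by
  set star := SimpleGraph.fromEdgeSet (G.incidenceSet v)
  have hstar : star.edgeCard = G.degree v := SimpleGraph.edgeCard_fromEdgeSet_incidenceSet v
  have hdom := hG V star (IsSubgraphOf.of_le (G.fromEdgeSet_incidenceSet_le v)) (by omega)
    (corner δ)
  rw [hstar] at hdom
  have hm : G.degree v ≤ G.edgeCard := G.degree_le_card_edgeFinset v
  refine pow_le_pow_of_rpow_one_div_le h0.le (by positivity) hv.ne' (by omega) ?_
  calc δ ^ ((1 : ℝ) / G.degree v)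
      ≤ homDensity star (corner δ) ^ ((1 : ℝ) / G.degree v) := by
        refine Real.rpow_le_rpow h0.le ?_ (by positivity)
        simpa using pow_card_le_homDensity_corner (C := {v})
          (by simpa using G.isVertexCover_fromEdgeSet_incidenceSet v) h0.le h1
    _ ≤ homDensity G (corner δ) ^ ((1 : ℝ) / G.edgeCard) := hdom
    _ ≤ (2 ^ Fintype.card V * δ ^ τ) ^ ((1 : ℝ) / G.edgeCard) :=
        Real.rpow_le_rpow (homDensity_corner_nonneg G δ) (homDensity_corner_le hτ h0.le h1)
          (by positivity)

theorem IsDominating.maxDegree_mul_le_edgeCard {G : SimpleGraph V} (hG : IsDominating G)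
    {τ : ℕ} (hτ : ∀ T : Finset V, G.IsVertexCover T → τ ≤ #T) :
    G.maxDegree * τ ≤ G.edgeCard := by
  rcases Nat.eq_zero_or_pos G.maxDegree with hΔ | hΔ
  · simp [hΔ]
  have : Nonempty V := by
    by_contra! hV
    exact hΔ.ne' (Nat.le_zero.1 (G.maxDegree_le_of_forall_degree_le 0 fun v => isEmptyElim v))
  obtain ⟨v, hv⟩ := G.exists_maximal_degree_vertex
  rw [hv] at hΔ ⊢
  rw [mul_comm]
  refine le_of_forall_pow_le_mul_pow (K := (2 ^ Fintype.card V) ^ G.degree v) (by positivity)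
    fun δ h0 h1 => ?_
  rw [pow_mul, ← mul_pow]
  exact hG.pow_edgeCard_le hτ hΔ h0 h1

end

theorem stmt4 {V : Type} [Fintype V] (H : SimpleGraph V)
    (hH : H.Connected) (hdom : IsDominating H)
    (A : Set V)
    (hbip : ∀ v w, H.Adj v w → (v ∈ A ↔ w ∉ A))
    (hsize : Nat.card A ≤ Nat.card ↥(Aᶜ)) :
    (∀ v ∈ A, H.degree v = H.maxDegree) ∧
      H.edgeCard = H.maxDegree * Nat.card A := by
  obtain ⟨C, hC, hτ⟩ := H.exists_isVertexCover_forall_card_le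
  have hCτ := hdom.maxDegree_mul_le_edgeCard hτ
  have hCindep : H.IsIndepSet C :=
    hC.isIndepSet_of_sum_degree_le ((H.sum_degree_le_maxDegree_mul C).trans hCτ)
  have hAC : Nat.card A ≤ #C := by
    rcases hH.preconnected.eq_or_eq_compl_of_forall_adj hbip
      (fun v w => hCindep.mem_iff_notMem_of_isVertexCover hC) with h | h
    · simp [← h]
    · simpa [← h] using hsize
  have hbipA : H.IsBipartiteWith A.toFinset Aᶜ.toFinset := by
    refine ⟨by simpa using disjoint_compl_right, fun v w h => ?_⟩
    simp only [Set.coe_toFinset, Set.mem_compl_iff]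
    have := hbip v w h
    tauto
  have hsumA : ∑ v ∈ A.toFinset, H.degree v = H.edgeCard :=
    SimpleGraph.isBipartiteWith_sum_degrees_eq_card_edges hbipA
  have hcardA : Nat.card A = #A.toFinset := Nat.card_eq_card_toFinset A
  have hdegA := H.degree_eq_maxDegree_of_maxDegree_mul_le_sum (s := A.toFinset) <| by
    rw [hsumA, ← hcardA]
    exact (Nat.mul_le_mul_left _ hAC).trans hCτ
  refine ⟨fun v hv => hdegA v (Set.mem_toFinset.2 hv), ?_⟩
  rw [← hsumA, sum_congr rfl hdegA, sum_const, smul_eq_mul, hcardA, mul_comm]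
end

section
/- The 6-cycle C_6 is a dominating graph: for every subgraph H' of C_6 with at least one edge and every graphon W, t_{C_6}(W)^{1/6} ≥ t_{H'}(W)^{1/e(H')}. -/
open MeasureTheory
open scoped Classical

/-!
Label the edges of the hexagon by symmetric `[0,1]`-valued kernels and write `t(K₀, …, K₅)`
for the resulting cycle density. A subgraph `H'` of `C₆` is the labelling by `W` on its edges
and by the constant kernel `1` elsewhere, so it suffices to prove the generalised Hölder
inequality `t(K₀, …, K₅)⁶ ≤ ∏ᵢ t(Kᵢ, …, Kᵢ)`.

Cutting the hexagon at two opposite vertices gives `t(a,b,c,d,e,f) = ∫∫ P_abc(x,y) P_def(y,x)`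
with three-edge path densities `P`, and Cauchy–Schwarz yields
`t(a,b,c,d,e,f)² ≤ t(a,b,c,c,b,a) · t(d,e,f,f,e,d)`. Applied to rotations of palindromic
labellings this gives, writing `t(u)` for `t(u, …, u)`, first `t(u,v,v,v,v,u)³ ≤ t(u) t(v)²`
(after cancelling one factor, which is finite since kernels are bounded by `1`), then
`t(a,b,c,c,b,a)⁶ ≤ (t(a) t(b) t(c))²`, and one more Cauchy–Schwarz step gives the inequality.
-/

open MeasureTheory ENNReal Function

theorem sq_lintegral_mul_le {α : Type*} [MeasurableSpace α] {ρ : Measure α} {f g : α → ℝ≥0∞}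
    (hf : AEMeasurable f ρ) (hg : AEMeasurable g ρ) :
    (∫⁻ a, f a * g a ∂ρ) ^ 2 ≤ (∫⁻ a, f a ^ 2 ∂ρ) * ∫⁻ a, g a ^ 2 ∂ρ := by
  have h := ENNReal.lintegral_mul_le_Lp_mul_Lq ρ Real.HolderConjugate.two_two hf hg
  simp only [Pi.mul_apply, ENNReal.rpow_two] at h
  calc (∫⁻ a, f a * g a ∂ρ) ^ 2
      ≤ ((∫⁻ a, f a ^ 2 ∂ρ) ^ (1 / 2 : ℝ) * (∫⁻ a, g a ^ 2 ∂ρ) ^ (1 / 2 : ℝ)) ^ 2 := by gcongr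
    _ = (∫⁻ a, f a ^ 2 ∂ρ) * ∫⁻ a, g a ^ 2 ∂ρ := by
      rw [mul_pow, ← ENNReal.rpow_natCast, ← ENNReal.rpow_natCast, ← ENNReal.rpow_mul,
        ← ENNReal.rpow_mul]
      norm_num

theorem Real.rpow_one_div_le_of_pow_le {a c : ℝ} {m k : ℕ} (ha : 0 ≤ a) (hc : 0 ≤ c)
    (hm : 0 < m) (hk : 0 < k) (h : a ^ m ≤ c ^ k) : a ^ (1 / k : ℝ) ≤ c ^ (1 / m : ℝ) := by
  have hmk : (0 : ℝ) < m * k := by positivity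
  calc a ^ (1 / k : ℝ) = (a ^ m) ^ (1 / (m * k) : ℝ) := by
        rw [← Real.rpow_natCast, ← Real.rpow_mul ha]
        field_simp
    _ ≤ (c ^ k) ^ (1 / (m * k) : ℝ) := by gcongr
    _ = c ^ (1 / m : ℝ) := by
        rw [← Real.rpow_natCast, ← Real.rpow_mul hc]
        field_simp

section PiMeasure

variable {Ω : Type*} [MeasurableSpace Ω] (μ : Measure Ω)

theorem measurePreserving_comp_of_injective [IsProbabilityMeasure μ] {ι ι' : Type*}
    [Fintype ι] [Fintype ι'] {f : ι' → ι} (hf : Injective f) :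
    MeasurePreserving (fun x : ι → Ω => x ∘ f) (Measure.pi fun _ => μ)
      (Measure.pi fun _ => μ) := by
  refine ⟨by fun_prop, (Measure.pi_eq fun s hs => ?_).symm⟩
  classical
  set t : ι → Set Ω := extend f s fun _ => Set.univ
  have ht_range (i' : ι') : t (f i') = s i' := hf.extend_apply _ _ _
  have ht_compl {i : ι} (hi : ¬∃ i', f i' = i) : t i = Set.univ := extend_apply' _ _ _ hi
  have hpre : (fun x : ι → Ω => x ∘ f) ⁻¹' Set.univ.pi s = Set.univ.pi t := by
    ext x
    simp only [Set.mem_preimage, Set.mem_univ_pi, comp_apply]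
    refine ⟨fun h i => ?_, fun h i' => ht_range i' ▸ h (f i')⟩
    by_cases hi : ∃ i', f i' = i
    · obtain ⟨i', rfl⟩ := hi
      exact (ht_range i').symm ▸ h i'
    · simp [ht_compl hi]
  rw [Measure.map_apply (by fun_prop) (.univ_pi hs), hpre, Measure.pi_pi]
  refine (Fintype.prod_of_injective f hf _ _ (fun i hi => ?_) fun i' => by rw [ht_range]).symm
  rw [ht_compl (by simpa using hi), measure_univ]

theorem Measurable.comp_insertNth {β : Type*} [MeasurableSpace β] {n : ℕ}
    {g : (Fin (n + 1) → Ω) → β} (hg : Measurable g) (i : Fin (n + 1)) (a : Ω) :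
    Measurable fun y : Fin n → Ω => g (i.insertNth a y) :=
  hg.comp <|
    (MeasurableEquiv.piFinSuccAbove (fun _ => Ω) i).symm.measurable.comp measurable_prodMk_left

theorem lintegral_pi_fin_succAbove [SigmaFinite μ] {n : ℕ} (i : Fin (n + 1))
    {g : (Fin (n + 1) → Ω) → ℝ≥0∞} (hg : Measurable g) :
    ∫⁻ x, g x ∂Measure.pi (fun _ => μ) =
      ∫⁻ a, ∫⁻ y, g (i.insertNth a y) ∂Measure.pi (fun _ => μ) ∂μ := by
  have e := (measurePreserving_piFinSuccAbove (fun _ => μ) i).symm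
  rw [← e.lintegral_comp hg]
  exact lintegral_prod (fun z => g (Fin.insertNth i z.1 z.2))
    (hg.comp e.measurable).aemeasurable

theorem lintegral_pi_fin_six [SigmaFinite μ] {g : (Fin 6 → Ω) → ℝ≥0∞} (hg : Measurable g) :
    ∫⁻ x, g x ∂Measure.pi (fun _ => μ) =
      ∫⁻ x₀, ∫⁻ x₃, ∫⁻ x₁, ∫⁻ x₂, ∫⁻ x₄, ∫⁻ x₅, g ![x₀, x₁, x₂, x₃, x₄, x₅]
        ∂μ ∂μ ∂μ ∂μ ∂μ ∂μ := by
  rw [lintegral_pi_fin_succAbove μ 0 hg]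
  refine lintegral_congr fun x₀ => ?_
  have hg₀ := hg.comp_insertNth 0 x₀
  rw [lintegral_pi_fin_succAbove μ 2 hg₀]
  refine lintegral_congr fun x₃ => ?_
  have hg₃ := hg₀.comp_insertNth 2 x₃
  rw [lintegral_pi_fin_succAbove μ 0 hg₃]
  refine lintegral_congr fun x₁ => ?_
  have hg₁ := hg₃.comp_insertNth 0 x₁
  rw [lintegral_pi_fin_succAbove μ 0 hg₁]
  refine lintegral_congr fun x₂ => ?_
  have hg₂ := hg₁.comp_insertNth 0 x₂
  rw [lintegral_pi_fin_succAbove μ 0 hg₂]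
  refine lintegral_congr fun x₄ => ?_
  rw [lintegral_pi_fin_succAbove μ 0 (hg₂.comp_insertNth 0 x₄)]
  refine lintegral_congr fun x₅ => ?_
  rw [Measure.pi_of_empty, lintegral_dirac]
  exact congrArg g (funext fun i => by fin_cases i <;> rfl)

end PiMeasure

structure SymmKernel (Ω : Type*) [MeasurableSpace Ω] where
  toFun : Ω → Ω → ℝ≥0∞
  measurable : Measurable (uncurry toFun)
  symm : ∀ x y, toFun x y = toFun y x
  le_one : ∀ x y, toFun x y ≤ 1

namespace SymmKernel

variable {Ω : Type*} [MeasurableSpace Ω]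

instance : CoeFun (SymmKernel Ω) fun _ => Ω → Ω → ℝ≥0∞ := ⟨toFun⟩

instance : One (SymmKernel Ω) :=
  ⟨⟨fun _ _ => 1, measurable_const, fun _ _ => rfl, fun _ _ => le_rfl⟩⟩

@[simp] theorem one_apply (x y : Ω) : (1 : SymmKernel Ω) x y = 1 := rfl

theorem ne_top (K : SymmKernel Ω) (x y : Ω) : K x y ≠ ∞ :=
  ne_top_of_le_ne_top one_ne_top (K.le_one x y)

@[fun_prop]
theorem measurable_comp (K : SymmKernel Ω) {α : Type*} [MeasurableSpace α] {u v : α → Ω}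
    (hu : Measurable u) (hv : Measurable v) : Measurable fun a => K (u a) (v a) :=
  K.measurable.comp (hu.prodMk hv)

end SymmKernel

section CycleDensity

variable {Ω : Type*} [MeasurableSpace Ω] (μ : Measure Ω)

noncomputable def cycleDensity {n : ℕ} [NeZero n] (K : Fin n → SymmKernel Ω) : ℝ≥0∞ :=
  ∫⁻ x, ∏ i, K i (x i) (x (i + 1)) ∂Measure.pi fun _ => μ

variable {μ} {n : ℕ} [NeZero n]

theorem measurable_cycleIntegrand (K : Fin n → SymmKernel Ω) :
    Measurable fun x : Fin n → Ω => ∏ i, K i (x i) (x (i + 1)) :=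
  Finset.measurable_prod _ fun i _ => by fun_prop

theorem cycleDensity_le_one [IsProbabilityMeasure μ] (K : Fin n → SymmKernel Ω) :
    cycleDensity μ K ≤ 1 :=
  (lintegral_mono fun _ => Finset.prod_le_one' fun i _ => (K i).le_one _ _).trans_eq (by simp)

theorem cycleDensity_one [IsProbabilityMeasure μ] : cycleDensity μ (fun _ : Fin n => 1) = 1 := by
  simp [cycleDensity]

theorem cycleDensity_rotate [SigmaFinite μ] (K : Fin n → SymmKernel Ω) :
    cycleDensity μ (fun i => K (i + 1)) = cycleDensity μ K := by
  set e := Equiv.addRight (1 : Fin n)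
  have he := measurePreserving_piCongrLeft (fun _ : Fin n => μ) e
  have hshift : ∀ (y : Fin n → Ω) i, MeasurableEquiv.piCongrLeft (fun _ => Ω) e y (i + 1) = y i :=
    fun y i => by
      rw [MeasurableEquiv.coe_piCongrLeft]
      exact Equiv.piCongrLeft_apply_apply (fun _ => Ω) e y i
  rw [cycleDensity, cycleDensity, ← he.lintegral_comp (measurable_cycleIntegrand K)]
  refine lintegral_congr fun y => Fintype.prod_equiv e _ _ fun i => ?_
  simp [e, hshift]

variable (μ) in
noncomputable def pathDensity (p q r : SymmKernel Ω) (u v : Ω) : ℝ≥0∞ :=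
  ∫⁻ s, ∫⁻ t, p u s * q s t * r t v ∂μ ∂μ

theorem measurable_pathDensity [SFinite μ] (p q r : SymmKernel Ω) :
    Measurable (uncurry (pathDensity μ p q r)) := by
  unfold pathDensity
  fun_prop

theorem pathDensity_comm [SFinite μ] (p q r : SymmKernel Ω) (u v : Ω) :
    pathDensity μ r q p v u = pathDensity μ p q r u v := by
  rw [pathDensity, pathDensity, lintegral_lintegral_swap (by fun_prop)]
  refine lintegral_congr fun s => lintegral_congr fun t => ?_
  rw [r.symm, q.symm, p.symm]
  ring

theorem cycleDensity_six_eq [SigmaFinite μ] (a b c d e f : SymmKernel Ω) :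
    cycleDensity μ ![a, b, c, d, e, f] =
      ∫⁻ x, ∫⁻ y, pathDensity μ a b c x y * pathDensity μ d e f y x ∂μ ∂μ := by
  rw [cycleDensity, lintegral_pi_fin_six μ (measurable_cycleIntegrand _)]
  refine lintegral_congr fun x₀ => lintegral_congr fun x₃ => ?_
  have hA : ∀ x₁ x₂, a x₀ x₁ * b x₁ x₂ * c x₂ x₃ ≠ ∞ := fun x₁ x₂ =>
    mul_ne_top (mul_ne_top (a.ne_top _ _) (b.ne_top _ _)) (c.ne_top _ _)
  calc _ = ∫⁻ x₁, ∫⁻ x₂, ∫⁻ x₄, ∫⁻ x₅,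
        (a x₀ x₁ * b x₁ x₂ * c x₂ x₃) * (d x₃ x₄ * e x₄ x₅ * f x₅ x₀) ∂μ ∂μ ∂μ ∂μ := by
        simp only [Fin.prod_univ_six]
        congr! 8 with x₁ x₂ x₄ x₅
        change a x₀ x₁ * b x₁ x₂ * c x₂ x₃ * d x₃ x₄ * e x₄ x₅ * f x₅ x₀ = _
        ring
    _ = ∫⁻ x₁, ∫⁻ x₂, (a x₀ x₁ * b x₁ x₂ * c x₂ x₃) * pathDensity μ d e f x₃ x₀ ∂μ ∂μ := by
        simp only [lintegral_const_mul' _ _ (hA _ _), pathDensity]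
    _ = pathDensity μ a b c x₀ x₃ * pathDensity μ d e f x₃ x₀ := by
        rw [pathDensity.eq_1 μ a, ← lintegral_mul_const _ (by fun_prop)]
        exact lintegral_congr fun x₁ => lintegral_mul_const _ (by fun_prop)

theorem cycleDensity_sq_le [SigmaFinite μ] (a b c d e f : SymmKernel Ω) :
    cycleDensity μ ![a, b, c, d, e, f] ^ 2 ≤
      cycleDensity μ ![a, b, c, c, b, a] * cycleDensity μ ![d, e, f, f, e, d] := by
  set F := pathDensity μ a b c
  set G := pathDensity μ d e f
  have hF : Measurable fun z : Ω × Ω => F z.1 z.2 := measurable_pathDensity a b c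
  have hG : Measurable fun z : Ω × Ω => G z.2 z.1 :=
    (measurable_pathDensity d e f).comp measurable_swap
  have habc : cycleDensity μ ![a, b, c, c, b, a] = ∫⁻ z, F z.1 z.2 ^ 2 ∂μ.prod μ := by
    rw [cycleDensity_six_eq, lintegral_prod _ (hF.pow_const 2).aemeasurable]
    simp only [pathDensity_comm c b a, F, sq]
  have hdef : cycleDensity μ ![d, e, f, f, e, d] = ∫⁻ z, G z.2 z.1 ^ 2 ∂μ.prod μ := by
    rw [cycleDensity_six_eq, lintegral_prod _ (hG.pow_const 2).aemeasurable,
      lintegral_lintegral_swap (f := fun x y => G y x ^ 2) (hG.pow_const 2).aemeasurable]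
    simp only [pathDensity_comm f e d, G, sq]
  rw [cycleDensity_six_eq, ← lintegral_prod (fun z => F z.1 z.2 * G z.2 z.1)
    (hF.mul hG).aemeasurable, habc, hdef]
  exact sq_lintegral_mul_le hF.aemeasurable hG.aemeasurable

end CycleDensity

section HexagonInequality

variable {Ω : Type*} [MeasurableSpace Ω] {μ : Measure Ω} [IsProbabilityMeasure μ]

theorem cycleDensity_six_rotate (a b c d e f : SymmKernel Ω) :
    cycleDensity μ ![b, c, d, e, f, a] = cycleDensity μ ![a, b, c, d, e, f] := by
  rw [← cycleDensity_rotate ![a, b, c, d, e, f]]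
  exact congrArg _ (funext fun i => by fin_cases i <;> rfl)

theorem cycleDensity_pow_three_le (u v : SymmKernel Ω) :
    cycleDensity μ ![u, v, v, v, v, u] ^ 3 ≤
      cycleDensity μ ![u, u, u, u, u, u] * cycleDensity μ ![v, v, v, v, v, v] ^ 2 := by
  have hx := cycleDensity_sq_le (μ := μ) v v v v u u
  have hy := cycleDensity_sq_le (μ := μ) u u u u v v
  rw [cycleDensity_six_rotate] at hx hy
  set x := cycleDensity μ ![u, v, v, v, v, u]
  set y := cycleDensity μ ![v, u, u, u, u, v]
  rcases eq_or_ne x 0 with hx₀ | hx₀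
  · simp [hx₀]
  refine (ENNReal.mul_le_mul_iff_left hx₀ (ne_top_of_le_ne_top one_ne_top
    (cycleDensity_le_one _))).1 ?_
  calc x ^ 3 * x = (x ^ 2) ^ 2 := by ring
    _ ≤ (cycleDensity μ ![v, v, v, v, v, v] * y) ^ 2 := by gcongr
    _ = cycleDensity μ ![v, v, v, v, v, v] ^ 2 * y ^ 2 := by ring
    _ ≤ cycleDensity μ ![v, v, v, v, v, v] ^ 2 * (cycleDensity μ ![u, u, u, u, u, u] * x) := by
      gcongr
    _ = _ := by ring

theorem cycleDensity_palindrome_pow_six_le (a b c : SymmKernel Ω) :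
    cycleDensity μ ![a, b, c, c, b, a] ^ 6 ≤
      (cycleDensity μ ![a, a, a, a, a, a] * cycleDensity μ ![b, b, b, b, b, b] *
        cycleDensity μ ![c, c, c, c, c, c]) ^ 2 := by
  have h := cycleDensity_sq_le (μ := μ) b c c b a a
  rw [cycleDensity_six_rotate] at h
  calc cycleDensity μ ![a, b, c, c, b, a] ^ 6 = (cycleDensity μ ![a, b, c, c, b, a] ^ 2) ^ 3 := by
        ring
    _ ≤ (cycleDensity μ ![b, c, c, c, c, b] * cycleDensity μ ![b, a, a, a, a, b]) ^ 3 := by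
        gcongr
    _ = cycleDensity μ ![b, c, c, c, c, b] ^ 3 * cycleDensity μ ![b, a, a, a, a, b] ^ 3 := by
        ring
    _ ≤ _ := mul_le_mul' (cycleDensity_pow_three_le b c) (cycleDensity_pow_three_le b a)
    _ = _ := by ring

theorem cycleDensity_pow_six_le (K : Fin 6 → SymmKernel Ω) :
    cycleDensity μ K ^ 6 ≤ ∏ i, cycleDensity μ fun _ : Fin 6 => K i := by
  obtain ⟨a, b, c, d, e, f, rfl⟩ : ∃ a b c d e f, K = ![a, b, c, d, e, f] :=
    ⟨K 0, K 1, K 2, K 3, K 4, K 5, funext fun i => by fin_cases i <;> rfl⟩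
  have hconst (v : SymmKernel Ω) : (fun _ : Fin 6 => v) = ![v, v, v, v, v, v] :=
    funext fun i => by fin_cases i <;> rfl
  simp only [Fin.prod_univ_six, Matrix.cons_val, hconst]
  refine (ENNReal.pow_le_pow_left_iff two_ne_zero).1 ?_
  calc (cycleDensity μ ![a, b, c, d, e, f] ^ 6) ^ 2
      = (cycleDensity μ ![a, b, c, d, e, f] ^ 2) ^ 6 := by ring
    _ ≤ (cycleDensity μ ![a, b, c, c, b, a] * cycleDensity μ ![d, e, f, f, e, d]) ^ 6 := by
      gcongr
      exact cycleDensity_sq_le a b c d e f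
    _ = cycleDensity μ ![a, b, c, c, b, a] ^ 6 * cycleDensity μ ![d, e, f, f, e, d] ^ 6 := by
      ring
    _ ≤ _ := mul_le_mul' (cycleDensity_palindrome_pow_six_le a b c)
          (cycleDensity_palindrome_pow_six_le d e f)
    _ = _ := by ring

end HexagonInequality

section EdgeDensity

variable {Ω : Type*} [MeasurableSpace Ω] {V : Type*}

namespace SymmKernel

def onEdge (K : SymmKernel Ω) (x : V → Ω) : Sym2 V → ℝ≥0∞ :=
  Sym2.lift ⟨fun i j => K (x i) (x j), fun _ _ => K.symm _ _⟩

@[simp]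
theorem onEdge_mk (K : SymmKernel Ω) (x : V → Ω) (i j : V) : K.onEdge x s(i, j) = K (x i) (x j) :=
  rfl

theorem measurable_onEdge (K : SymmKernel Ω) (e : Sym2 V) :
    Measurable fun x : V → Ω => K.onEdge x e := by
  induction e using Sym2.ind with
  | _ i j => exact K.measurable_comp (measurable_pi_apply i) (measurable_pi_apply j)

end SymmKernel

variable (μ : Measure Ω) in
noncomputable def edgeSetDensity [Fintype V] (K : SymmKernel Ω) (J : Finset (Sym2 V)) : ℝ≥0∞ :=
  ∫⁻ x, ∏ e ∈ J, K.onEdge x e ∂Measure.pi fun _ => μ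

variable {μ : Measure Ω}

theorem edgeSetDensity_image_sym2Map [IsProbabilityMeasure μ] {V' : Type*} [Fintype V] [Fintype V']
    [DecidableEq V] {f : V' → V} (hf : Injective f) (K : SymmKernel Ω) (J : Finset (Sym2 V')) :
    edgeSetDensity μ K (J.image (Sym2.map f)) = edgeSetDensity μ K J := by
  rw [edgeSetDensity, edgeSetDensity, ← (measurePreserving_comp_of_injective μ hf).lintegral_comp
    (Finset.measurable_prod _ fun e _ => K.measurable_onEdge e)]
  refine lintegral_congr fun x => ?_
  rw [Finset.prod_image fun _ _ _ _ h => Sym2.map.injective hf h]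
  refine Finset.prod_congr rfl fun e _ => ?_
  induction e using Sym2.ind with
  | _ i j => rfl

theorem edgeSetDensity_image_cycleEdge {n : ℕ} [NeZero n]
    (hinj : Injective fun i : Fin n => s(i, i + 1)) (K : SymmKernel Ω) (S : Finset (Fin n)) :
    edgeSetDensity μ K (S.image fun i => s(i, i + 1)) =
      cycleDensity μ fun i => if i ∈ S then K else 1 := by
  refine lintegral_congr fun x => ?_
  have hlabel (i : Fin n) : (if i ∈ S then K else 1) (x i) (x (i + 1)) =
      if i ∈ S then K (x i) (x (i + 1)) else 1 := by
    split_ifs <;> rfl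
  rw [Finset.prod_image fun i _ j _ h => hinj h]
  simp only [hlabel, Finset.prod_ite_mem, Finset.univ_inter, SymmKernel.onEdge_mk]

end EdgeDensity

section SixCycle

open SimpleGraph

theorem injective_cycleEdge_six : Injective fun i : Fin 6 => s(i, i + 1) := by
  decide

-- Phrased through `edgeSet` rather than a `toFinset`: `homDensity` and `edgeCard` use the
-- classical `Fintype` instance on the edge set, not the computable one.
theorem mem_edgeSet_cycleGraph_six {e : Sym2 (Fin 6)} :
    e ∈ (cycleGraph 6).edgeSet ↔ ∃ i, s(i, i + 1) = e := by
  induction e using Sym2.ind with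
  | _ a b =>
    rw [mem_edgeSet]
    revert a b
    decide

theorem edgeCard_cycleGraph_six : (cycleGraph 6).edgeCard = 6 := by
  calc (cycleGraph 6).edgeCard = (Finset.univ.image fun i : Fin 6 => s(i, i + 1)).card := by
        rw [edgeCard]
        congr 1
        ext e
        simp [mem_edgeSet_cycleGraph_six]
    _ = 6 := Finset.card_image_of_injective _ injective_cycleEdge_six

theorem edgeSetDensity_pow_six_le_of_subset {Ω : Type*} [MeasurableSpace Ω] {μ : Measure Ω}
    [IsProbabilityMeasure μ] (K : SymmKernel Ω) {J : Finset (Sym2 (Fin 6))}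
    (hJ : ∀ e ∈ J, e ∈ (cycleGraph 6).edgeSet) :
    edgeSetDensity μ K J ^ 6 ≤ cycleDensity μ (fun _ : Fin 6 => K) ^ J.card := by
  obtain ⟨S, -, rfl⟩ := (Finset.subset_image_iff (s := .univ)).1 fun e he =>
    Finset.mem_image.2 <| by simpa using mem_edgeSet_cycleGraph_six.1 (hJ e he)
  rw [Finset.card_image_of_injective _ injective_cycleEdge_six,
    edgeSetDensity_image_cycleEdge injective_cycleEdge_six]
  calc _ ≤ ∏ i, cycleDensity μ fun _ : Fin 6 => if i ∈ S then K else 1 := cycleDensity_pow_six_le _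
    _ = ∏ i, if i ∈ S then cycleDensity μ fun _ : Fin 6 => K else 1 := by
      simp only [apply_ite (fun L : SymmKernel Ω => cycleDensity μ fun _ : Fin 6 => L),
        cycleDensity_one]
    _ = _ := by simp [Finset.prod_ite_mem]

end SixCycle

instance : IsProbabilityMeasure (volume.restrict (Set.Icc (0 : ℝ) 1)) := ⟨by simp⟩

noncomputable def Graphon.toSymmKernel (W : Graphon) : SymmKernel ℝ where
  toFun x y := ENNReal.ofReal (W.toFun x y)
  measurable := W.measurable'.ennreal_ofReal
  symm x y := by rw [W.symm]
  le_one x y := ENNReal.ofReal_le_one.2 (W.le_one x y)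

theorem homDensity_eq_toReal_edgeSetDensity {V : Type} [Fintype V] (H : SimpleGraph V)
    (W : Graphon) :
    homDensity H W = (edgeSetDensity (volume.restrict (Set.Icc 0 1)) W.toSymmKernel
      H.edgeSet.toFinset).toReal := by
  have hW (x : V → ℝ) (e : Sym2 V) : W.toSymmKernel.onEdge x e =
      ENNReal.ofReal (Sym2.lift ⟨fun i j => W.toFun (x i) (x j), fun i j => W.symm _ _⟩ e) :=
    e.ind fun _ _ => rfl
  have hnonneg (x : V → ℝ) (e : Sym2 V) :
      0 ≤ Sym2.lift ⟨fun i j => W.toFun (x i) (x j), fun i j => W.symm _ _⟩ e :=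
    e.ind fun _ _ => W.nonneg _ _
  have hmeas (e : Sym2 V) : Measurable fun x : V → ℝ =>
      Sym2.lift ⟨fun i j => W.toFun (x i) (x j), fun i j => W.symm _ _⟩ e :=
    e.ind fun i j => W.measurable'.comp (f := fun x : V → ℝ => (x i, x j)) (by fun_prop)
  rw [homDensity, volume_pi, Measure.restrict_pi_pi, integral_eq_lintegral_of_nonneg_ae
    (.of_forall fun x => Finset.prod_nonneg fun e _ => hnonneg x e)
    (Finset.measurable_prod _ fun e _ => hmeas e).aestronglyMeasurable]
  simp only [edgeSetDensity, hW, ← ENNReal.ofReal_prod_of_nonneg fun e _ => hnonneg _ e]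

theorem homDensity_cycleGraph_six (W : Graphon) :
    homDensity (SimpleGraph.cycleGraph 6) W =
      (cycleDensity (volume.restrict (Set.Icc 0 1)) fun _ : Fin 6 => W.toSymmKernel).toReal := by
  have h := edgeSetDensity_image_cycleEdge (μ := volume.restrict (Set.Icc 0 1))
    injective_cycleEdge_six W.toSymmKernel .univ
  simp only [Finset.mem_univ, if_true] at h
  rw [homDensity_eq_toReal_edgeSetDensity, ← h]
  congr 2
  ext e
  simp [mem_edgeSet_cycleGraph_six]

theorem stmt15 : IsDominating (SimpleGraph.cycleGraph 6) := by
  rintro V' _ H' ⟨f, hf⟩ hH' W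
  have key := edgeSetDensity_pow_six_le_of_subset (μ := volume.restrict (Set.Icc (0 : ℝ) 1))
    W.toSymmKernel (J := H'.edgeSet.toFinset.image (Sym2.map f)) fun e he => by
      obtain ⟨e', he', rfl⟩ := Finset.mem_image.1 he
      exact f.map_mem_edgeSet (Set.mem_toFinset.1 he')
  rw [edgeSetDensity_image_sym2Map hf,
    Finset.card_image_of_injective _ (Sym2.map.injective hf)] at key
  rw [homDensity_eq_toReal_edgeSetDensity, homDensity_cycleGraph_six, edgeCard_cycleGraph_six]
  refine Real.rpow_one_div_le_of_pow_le toReal_nonneg toReal_nonneg (by norm_num) hH' ?_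
  rw [← toReal_pow, ← toReal_pow]
  exact toReal_mono (pow_ne_top (ne_top_of_le_ne_top one_ne_top (cycleDensity_le_one _))) key
end
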